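/- arXiv:1806.07795 — 5 statements merged into one kernel-verified Lean document; each statement's English description precedes it below -/
import Mathlib

section
/- Let k ∈ [0,2] and M̄ > 0. There exists a constant C > 0 (independent of N, λ and the configuration) such that: for every N ≥ 2, every family of pairwise distinct points x_1,…,x_N ∈ ℝ³ with minimal Euclidean distance d_min := min_{i≠j}|x_i−x_j| and every λ > 0 satisfying λ < (3/2)·M̄^{−1/3} and M^N(λ) ≤ M̄·N·λ³, one has for every index i: (1/N)·∑_{j≠i} |x_i−x_j|^{−k} ≤ C·( M̄·λ³/d_min^k + M̄^{k/3} ). -/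
/-- The `l∞` norm of a point of `ℝ³`. -/
noncomputable def linf (x : EuclideanSpace ℝ (Fin 3)) : ℝ := max (max |x 0| |x 1|) |x 2|

/-- The particle concentration `M^N(λ)`: the supremum over centers `c ∈ ℝ³` of the number of
particles lying in the closed `l∞`-ball of center `c` and radius `r`. -/
noncomputable def Mconc (N : ℕ) (x : Fin N → EuclideanSpace ℝ (Fin 3)) (r : ℝ) : ℕ :=
  sSup { m : ℕ | ∃ c : EuclideanSpace ℝ (Fin 3), m = Nat.card {i : Fin N | linf (x i - c) ≤ r} }

/-!
Split the particles `j ≠ i` according to their distance `d_j` to `x_i`. Those with `d_j ≤ λ` number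
at most `M^N(λ) ≤ M̄Nλ³` and contribute at most `d_min^{-k}` each; those beyond
`R = M̄^{-1/3}` contribute at most `R^{-k} = M̄^{k/3}` each. In between, the dyadic shell
`2^m λ < d_j ≤ 2^{m+1} λ` lies in a Euclidean ball of radius `2^{m+1} λ`, which is covered by
`8^{m+1}` `l∞`-cubes of radius `λ`, so it holds at most `M̄N (2^{m+1} λ)³` particles. Since `k ≤ 2`,
these shell bounds at least double from one shell to the next, so their sum is of the order of
the last one, `M̄N R^{3-k} = N M̄^{k/3}`.
-/

open Finset

theorem sum_range_le_of_two_mul_le {a : ℕ → ℝ} (h0 : 0 ≤ a 0) (h : ∀ m, 2 * a m ≤ a (m + 1))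
    (M : ℕ) : ∑ m ∈ range M, a m ≤ a M := by
  induction M with
  | zero => simpa using h0
  | succ M ih => rw [sum_range_succ]; linarith [h M]

theorem exists_dyadic_shell {r d : ℝ} (M : ℕ) (hr : r < d) (hd : d ≤ 2 ^ M * r) :
    ∃ m < M, 2 ^ m * r < d ∧ d ≤ 2 ^ (m + 1) * r := by
  induction M with
  | zero => simp at hd; linarith
  | succ M ih =>
    by_cases hdM : d ≤ 2 ^ M * r
    · obtain ⟨m, hm, hshell⟩ := ih hdM
      exact ⟨m, by omega, hshell⟩
    · exact ⟨M, by omega, not_le.1 hdM, hd⟩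

theorem exists_two_pow_mul_mem_Icc {r R : ℝ} (hr : 0 < r) (hrR : r ≤ 2 * R) :
    ∃ M : ℕ, R ≤ 2 ^ M * r ∧ 2 ^ M * r ≤ 2 * R := by
  by_cases hRr : R ≤ r
  · exact ⟨0, by simpa using hRr, by simpa using hrR⟩
  · obtain ⟨n, hn, hn'⟩ := exists_nat_pow_near (x := R / r) (y := (2 : ℝ))
      ((one_le_div hr).2 (not_le.1 hRr).le) one_lt_two
    rw [le_div_iff₀ hr] at hn
    rw [div_lt_iff₀ hr] at hn'
    exact ⟨n + 1, hn'.le, by rw [pow_succ]; linarith⟩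

theorem rpow_neg_le_dyadic_split {k δ r R d : ℝ} {M : ℕ} (hk : 0 ≤ k) (hδ : 0 < δ) (hδd : δ ≤ d)
    (hr : 0 < r) (hR : 0 < R) (hRM : R ≤ 2 ^ M * r) :
    d ^ (-k) ≤ (if d ≤ r then δ ^ (-k) else 0)
      + ∑ m ∈ range M, (if d ≤ 2 ^ (m + 1) * r then (2 ^ m * r) ^ (-k) else 0) + R ^ (-k) := by
  have hk' : -k ≤ 0 := neg_nonpos.2 hk
  have hnear : 0 ≤ if d ≤ r then δ ^ (-k) else 0 := by split_ifs <;> positivity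
  have hmid : 0 ≤ ∑ m ∈ range M, (if d ≤ 2 ^ (m + 1) * r then (2 ^ m * r) ^ (-k) else 0) :=
    sum_nonneg fun m _ => by split_ifs <;> positivity
  have hfar : 0 ≤ R ^ (-k) := by positivity
  by_cases hdr : d ≤ r
  · rw [if_pos hdr]
    linarith [Real.rpow_le_rpow_of_nonpos hδ hδd hk']
  by_cases hdM : d ≤ 2 ^ M * r
  · obtain ⟨m, hm, hlow, hup⟩ := exists_dyadic_shell M (not_le.1 hdr) hdM
    have hterm : d ^ (-k) ≤ if d ≤ 2 ^ (m + 1) * r then (2 ^ m * r) ^ (-k) else 0 := by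
      rw [if_pos hup]
      exact Real.rpow_le_rpow_of_nonpos (by positivity) hlow.le hk'
    have := single_le_sum (fun m _ => by split_ifs <;> positivity) (mem_range.2 hm)
      (f := fun m => if d ≤ 2 ^ (m + 1) * r then (2 ^ m * r) ^ (-k) else 0)
    linarith
  · linarith [Real.rpow_le_rpow_of_nonpos hR (hRM.trans (not_le.1 hdM).le) hk']

theorem sum_dyadic_shells_le {k ρ r R : ℝ} {M : ℕ} (hk0 : 0 ≤ k) (hk2 : k ≤ 2) (hρ : 0 ≤ ρ)
    (hr : 0 < r) (hM : 2 ^ M * r ≤ 2 * R) :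
    ∑ m ∈ range M, ρ * (2 ^ (m + 1) * r) ^ 3 * (2 ^ m * r) ^ (-k) ≤ 64 * ρ * R ^ (3 - k) := by
  have hR : 0 ≤ R := by nlinarith [(pow_pos two_pos M : (0 : ℝ) < 2 ^ M)]
  have h3k : (0 : ℝ) ≤ 3 - k := by linarith
  have hterm : ∀ m : ℕ, ρ * (2 ^ (m + 1) * r) ^ 3 * (2 ^ m * r) ^ (-k)
      = 8 * ρ * (2 ^ m * r) ^ ((3 : ℕ) - k) := fun m => by
    have hx : (0 : ℝ) < 2 ^ m * r := by positivity
    rw [Real.rpow_sub hx, Real.rpow_natCast, Real.rpow_neg hx.le, pow_succ]; ring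
  have hgrowth (m : ℕ) :
      2 * (2 ^ m * r) ^ ((3 : ℕ) - k) ≤ (2 ^ (m + 1) * r) ^ ((3 : ℕ) - k) := by
    rw [pow_succ, mul_comm _ (2 : ℝ), mul_assoc, Real.mul_rpow zero_le_two (by positivity)]
    gcongr
    calc (2 : ℝ) = 2 ^ (1 : ℝ) := (Real.rpow_one 2).symm
      _ ≤ 2 ^ ((3 : ℕ) - k) :=
        Real.rpow_le_rpow_of_exponent_le one_le_two (by push_cast; linarith)
  have htwo : (2 : ℝ) ^ (3 - k) ≤ 8 := by
    calc (2 : ℝ) ^ (3 - k) ≤ 2 ^ (3 : ℝ) :=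
          Real.rpow_le_rpow_of_exponent_le one_le_two (by linarith)
      _ = 8 := by norm_num
  calc ∑ m ∈ range M, ρ * (2 ^ (m + 1) * r) ^ 3 * (2 ^ m * r) ^ (-k)
      = 8 * ρ * ∑ m ∈ range M, (2 ^ m * r) ^ ((3 : ℕ) - k) := by simp only [hterm, mul_sum]
    _ ≤ 8 * ρ * (2 ^ M * r) ^ ((3 : ℕ) - k) := by
      gcongr
      exact sum_range_le_of_two_mul_le (by positivity) hgrowth M
    _ ≤ 8 * ρ * (2 * R) ^ (3 - k) := by push_cast; gcongr
    _ = 8 * ρ * 2 ^ (3 - k) * R ^ (3 - k) := by rw [Real.mul_rpow zero_le_two hR]; ring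
    _ ≤ 64 * ρ * R ^ (3 - k) := by
      have : 0 ≤ ρ * R ^ (3 - k) := by positivity
      nlinarith

theorem sum_rpow_neg_le_of_card_le {ι : Type*} (s : Finset ι) (d : ι → ℝ) {k δ ρ r R : ℝ}
    (hk : k ∈ Set.Icc (0 : ℝ) 2) (hδ : 0 < δ) (hd : ∀ j ∈ s, δ ≤ d j) (hr : 0 < r) (hR : 0 < R)
    (hrR : r ≤ 2 * R) (hcard : ∀ m : ℕ, (#{j ∈ s | d j ≤ 2 ^ m * r} : ℝ) ≤ ρ * (2 ^ m * r) ^ 3) :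
    ∑ j ∈ s, d j ^ (-k) ≤ ρ * r ^ 3 * δ ^ (-k) + 64 * ρ * R ^ (3 - k) + #s * R ^ (-k) := by
  obtain ⟨M, hRM, hMR⟩ := exists_two_pow_mul_mem_Icc hr hrR
  have hρ : 0 ≤ ρ :=
    nonneg_of_mul_nonneg_left ((Nat.cast_nonneg _).trans (hcard 0)) (by positivity)
  calc ∑ j ∈ s, d j ^ (-k)
      ≤ ∑ j ∈ s, ((if d j ≤ r then δ ^ (-k) else 0)
          + ∑ m ∈ range M, (if d j ≤ 2 ^ (m + 1) * r then (2 ^ m * r) ^ (-k) else 0)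
          + R ^ (-k)) :=
        sum_le_sum fun j hj => rpow_neg_le_dyadic_split hk.1 hδ (hd j hj) hr hR hRM
    _ = #{j ∈ s | d j ≤ r} * δ ^ (-k)
          + ∑ m ∈ range M, #{j ∈ s | d j ≤ 2 ^ (m + 1) * r} * (2 ^ m * r) ^ (-k)
          + #s * R ^ (-k) := by
        rw [sum_add_distrib, sum_add_distrib, sum_comm]
        simp only [← sum_filter, sum_const, nsmul_eq_mul]
    _ ≤ ρ * r ^ 3 * δ ^ (-k)
          + ∑ m ∈ range M, ρ * (2 ^ (m + 1) * r) ^ 3 * (2 ^ m * r) ^ (-k)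
          + #s * R ^ (-k) := by
        gcongr with m
        · simpa using hcard 0
        · exact hcard (m + 1)
    _ ≤ ρ * r ^ 3 * δ ^ (-k) + 64 * ρ * R ^ (3 - k) + #s * R ^ (-k) := by
        gcongr
        exact sum_dyadic_shells_le hk.1 hk.2 hρ hr hMR

theorem linf_le_of_forall_abs_le {v : EuclideanSpace ℝ (Fin 3)} {r : ℝ} (h : ∀ t, |v t| ≤ r) :
    linf v ≤ r :=
  max_le (max_le (h 0) (h 1)) (h 2)

theorem card_filter_linf_le_Mconc {N : ℕ} (x : Fin N → EuclideanSpace ℝ (Fin 3)) (r : ℝ)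
    (c : EuclideanSpace ℝ (Fin 3)) : #{j | linf (x j - c) ≤ r} ≤ Mconc N x r := by
  have hbdd : BddAbove {m : ℕ | ∃ c, m = Nat.card {i : Fin N | linf (x i - c) ≤ r}} :=
    ⟨N, by
      rintro _ ⟨c, rfl⟩
      exact (Nat.card_mono (Set.toFinite _) (Set.subset_univ _)).trans (by simp)⟩
  exact le_csSup hbdd ⟨c, by simp [Nat.card_eq_fintype_card, Fintype.card_subtype]⟩

theorem exists_fin_abs_sub_le {m : ℕ} (hm : 1 ≤ m) {r t : ℝ} (hr : 0 < r) (ht : |t| ≤ m * r) :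
    ∃ a : Fin m, |t - (2 * a + 1 - m) * r| ≤ r := by
  obtain ⟨ht₁, ht₂⟩ := abs_le.1 ht
  set u := (t + m * r) / (2 * r) with hu
  have hu0 : 0 ≤ u := div_nonneg (by linarith) (by linarith)
  have hum : u ≤ m := by rw [div_le_iff₀ (by linarith)]; linarith
  refine ⟨⟨min (m - 1) ⌊u⌋₊, by omega⟩, ?_⟩
  have hlow : ((min (m - 1) ⌊u⌋₊ : ℕ) : ℝ) ≤ u :=
    (Nat.cast_le.2 (min_le_right _ _)).trans (Nat.floor_le hu0)
  have hup : u ≤ (min (m - 1) ⌊u⌋₊ : ℕ) + 1 := by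
    rcases le_total ⌊u⌋₊ (m - 1) with h | h
    · rw [min_eq_right h]; exact (Nat.lt_floor_add_one u).le
    · rw [min_eq_left h, Nat.cast_sub hm]; push_cast; linarith
  have ht' : t = 2 * r * u - m * r := by rw [hu]; field_simp; ring
  rw [abs_le]
  constructor <;> nlinarith

theorem card_filter_dist_le_Mconc {N : ℕ} (x : Fin N → EuclideanSpace ℝ (Fin 3))
    (y : EuclideanSpace ℝ (Fin 3)) {r : ℝ} (hr : 0 < r) {m : ℕ} (hm : 1 ≤ m) :
    #{j | dist y (x j) ≤ m * r} ≤ m ^ 3 * Mconc N x r := by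
  -- the cubes of radius `r` centred at these points tile the cube of radius `m * r` around `y`
  let c : (Fin 3 → Fin m) → EuclideanSpace ℝ (Fin 3) :=
    fun a => y + WithLp.toLp 2 fun t => (2 * a t + 1 - m) * r
  have hcover : ({j | dist y (x j) ≤ m * r} : Finset (Fin N)) ⊆
      univ.biUnion fun a => {j | linf (x j - c a) ≤ r} := by
    intro j hj
    have hcoord : ∀ t, ∃ a : Fin m, |(x j t - y t) - (2 * a + 1 - m) * r| ≤ r := fun t =>
      exists_fin_abs_sub_le hm hr <| by
        rw [← Real.dist_eq, dist_comm]
        exact (PiLp.dist_apply_le _ _ t).trans (mem_filter.1 hj).2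
    choose a ha using hcoord
    refine mem_biUnion.2 ⟨a, mem_univ _, mem_filter.2 ⟨mem_univ _, linf_le_of_forall_abs_le ?_⟩⟩
    intro t
    convert ha t using 2
    simp only [c, PiLp.sub_apply, PiLp.add_apply]
    ring
  calc #{j | dist y (x j) ≤ m * r}
      ≤ ∑ a : Fin 3 → Fin m, #{j | linf (x j - c a) ≤ r} :=
        (card_le_card hcover).trans card_biUnion_le
    _ ≤ ∑ _a : Fin 3 → Fin m, Mconc N x r :=
        sum_le_sum fun a _ => card_filter_linf_le_Mconc x r (c a)
    _ = m ^ 3 * Mconc N x r := by simp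

theorem card_filter_dist_le_of_Mconc_le {N : ℕ} {x : Fin N → EuclideanSpace ℝ (Fin 3)} {r ρ : ℝ}
    (hr : 0 < r) (hM : (Mconc N x r : ℝ) ≤ ρ * r ^ 3) (y : EuclideanSpace ℝ (Fin 3)) (m : ℕ) :
    (#{j | dist y (x j) ≤ 2 ^ m * r} : ℝ) ≤ ρ * (2 ^ m * r) ^ 3 := by
  have h := card_filter_dist_le_Mconc x y hr (Nat.one_le_two_pow (n := m))
  push_cast at h
  calc (#{j | dist y (x j) ≤ 2 ^ m * r} : ℝ) ≤ (2 ^ m) ^ 3 * Mconc N x r := by exact_mod_cast h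
    _ ≤ (2 ^ m) ^ 3 * (ρ * r ^ 3) := by gcongr
    _ = ρ * (2 ^ m * r) ^ 3 := by ring

theorem stmt0 (k : ℝ) (hk : k ∈ Set.Icc (0:ℝ) 2) (Mbar : ℝ) (hMbar : 0 < Mbar) :
    ∃ C : ℝ, 0 < C ∧
      ∀ (N : ℕ), 2 ≤ N →
      ∀ x : Fin N → EuclideanSpace ℝ (Fin 3), Function.Injective x →
      ∀ dmin : ℝ, IsLeast {d : ℝ | ∃ i j : Fin N, i ≠ j ∧ d = dist (x i) (x j)} dmin →
      ∀ lam : ℝ, 0 < lam → lam < (3/2) * Mbar ^ (-(1:ℝ)/3) →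
      (Mconc N x lam : ℝ) ≤ Mbar * N * lam ^ 3 →
      ∀ i : Fin N,
        (1 / (N : ℝ)) * ∑ j ∈ Finset.univ.filter (fun j => j ≠ i), dist (x i) (x j) ^ (-k)
          ≤ C * (Mbar * lam ^ 3 / dmin ^ k + Mbar ^ (k / 3)) := by
  refine ⟨65, by norm_num, fun N hN x hinj dmin hdmin lam hlam hlamR hMc i => ?_⟩
  set s : Finset (Fin N) := univ.filter fun j => j ≠ i
  set R := Mbar ^ (-(1 : ℝ) / 3)
  have hR : 0 < R := by positivity
  have hdmin_pos : 0 < dmin := by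
    obtain ⟨⟨a, b, hab, rfl⟩, -⟩ := hdmin
    exact dist_pos.2 (hinj.ne hab)
  have hd : ∀ j ∈ s, dmin ≤ dist (x i) (x j) := fun j hj =>
    hdmin.2 ⟨i, j, (mem_filter.1 hj).2.symm, rfl⟩
  have hcard (m : ℕ) :
      (#{j ∈ s | dist (x i) (x j) ≤ 2 ^ m * lam} : ℝ) ≤ Mbar * N * (2 ^ m * lam) ^ 3 :=
    (Nat.cast_le.2 (card_le_card (filter_subset_filter _ (filter_subset _ _)))).trans
      (card_filter_dist_le_of_Mconc_le hlam hMc (x i) m)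
  have hsum := sum_rpow_neg_le_of_card_le s (fun j => dist (x i) (x j)) hk hdmin_pos hd hlam hR
    (by linarith) hcard
  have hRk : R ^ (-k) = Mbar ^ (k / 3) := by
    rw [← Real.rpow_mul hMbar.le]; ring_nf
  have hRk' : Mbar * R ^ (3 - k) = Mbar ^ (k / 3) := by
    calc Mbar * R ^ (3 - k) = Mbar ^ (1 : ℝ) * Mbar ^ (-(1 : ℝ) / 3 * (3 - k)) := by
          rw [Real.rpow_one, ← Real.rpow_mul hMbar.le]
      _ = Mbar ^ (k / 3) := by rw [← Real.rpow_add hMbar]; ring_nf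
  calc (1 / (N : ℝ)) * ∑ j ∈ s, dist (x i) (x j) ^ (-k)
      ≤ (1 / N) * (Mbar * N * lam ^ 3 * dmin ^ (-k) + 64 * (Mbar * N) * R ^ (3 - k)
          + #s * R ^ (-k)) := by gcongr
    _ ≤ (1 / N) * (Mbar * N * lam ^ 3 * dmin ^ (-k) + 64 * (Mbar * N) * R ^ (3 - k)
          + N * R ^ (-k)) := by
        gcongr
        exact_mod_cast (card_le_univ s).trans (by simp)
    _ = Mbar * lam ^ 3 / dmin ^ k + 65 * Mbar ^ (k / 3) := by
        rw [Real.rpow_neg hdmin_pos.le, hRk, ← hRk']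
        field_simp
        ring
    _ ≤ 65 * (Mbar * lam ^ 3 / dmin ^ k + Mbar ^ (k / 3)) := by
        have : 0 ≤ Mbar * lam ^ 3 / dmin ^ k := by positivity
        linarith
end

section
/- Let M̄ > 0. There exists a constant C > 0 (independent of N, λ and the configuration) such that: for every N ≥ 2, every family of pairwise distinct points x_1,…,x_N ∈ ℝ³ with minimal Euclidean distance d_min := min_{i≠j}|x_i−x_j| and every λ > 0 satisfying λ ≤ (2/3)·M̄^{−1/3} and M^N(λ) ≤ M̄·N·λ³, one has for every index i: (1/N)·∑_{j≠i} |x_i−x_j|^{−3} ≤ C·M̄·( λ³/d_min³ + |log(M̄^{1/3}·λ)| + 1 ). -/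
/-!
Around `x i`, the `l∞`-ball of radius `2 ^ m λ` is covered by `8 ^ m` balls of radius `λ`, so it
contains at most `8 ^ m M^N(λ) ≤ 8 ^ m M̄ N λ³` particles. Hence the particles at distance at
most `λ` contribute at most `M̄ N λ³ / d_min³`, each dyadic shell
`2 ^ k λ < |x_i - x_j| ≤ 2 ^ (k + 1) λ` contributes at most `8 M̄ N`, and the particles beyond
the scale `M̄^(-1/3)` contribute at most `N M̄`. The number of shells below that scale is
`O(1 + |log (M̄^(1/3) λ)|)`.
-/

open Finset

local notation "ℝ³" => EuclideanSpace ℝ (Fin 3)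

lemma linf_le_iff {y : ℝ³} {r : ℝ} : linf y ≤ r ↔ ∀ a, |y a| ≤ r := by
  simp [linf, Fin.forall_fin_succ, and_assoc]

lemma linf_le_norm (y : ℝ³) : linf y ≤ ‖y‖ :=
  linf_le_iff.2 fun a => PiLp.norm_apply_le y a

lemma card_linf_le_le_Mconc {N : ℕ} (x : Fin N → ℝ³) (c : ℝ³) (r : ℝ) :
    #{j | linf (x j - c) ≤ r} ≤ Mconc N x r := by
  refine le_csSup ⟨N, ?_⟩ ⟨c, by simp [Nat.card_eq_fintype_card, Fintype.card_subtype]⟩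
  rintro _ ⟨c', rfl⟩
  exact (Finite.card_subtype_le _).trans_eq (Nat.card_fin N)

/-- The `l∞`-balls of radius `r` around the eight points `c + r (±1, ±1, ±1)` cover the
`l∞`-ball of radius `2 r` around `c`. -/
noncomputable def octantCenter (c : ℝ³) (r : ℝ) (s : Fin 3 → Bool) : ℝ³ :=
  c + r • WithLp.toLp 2 (fun a => if s a then 1 else -1)

lemma linf_sub_octantCenter_le {y c : ℝ³} {r : ℝ} (hy : linf (y - c) ≤ 2 * r) :
    linf (y - octantCenter c r (fun a => decide (0 ≤ (y - c) a))) ≤ r := by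
  rw [linf_le_iff] at hy ⊢
  intro a
  have := abs_le.1 (hy a)
  simp only [octantCenter, PiLp.sub_apply, PiLp.add_apply, PiLp.smul_apply, smul_eq_mul] at this ⊢
  by_cases h : 0 ≤ y a - c a <;> simp [h, abs_le] <;> constructor <;> linarith

lemma card_linf_le_two_mul_le {N : ℕ} (x : Fin N → ℝ³) (c : ℝ³) (r : ℝ) {B : ℕ}
    (hB : ∀ c', #{j | linf (x j - c') ≤ r} ≤ B) :
    #{j | linf (x j - c) ≤ 2 * r} ≤ 8 * B := by
  have h := card_le_mul_card_image_of_maps_to (s := {j | linf (x j - c) ≤ 2 * r})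
    (f := fun j a => decide (0 ≤ (x j - c) a)) (t := univ) (fun _ _ => mem_univ _) B
    (fun s _ => (card_le_card fun j hj => ?_).trans (hB (octantCenter c r s)))
  · simpa [mul_comm] using h
  · simp only [mem_filter, mem_univ, true_and] at hj ⊢
    exact hj.2 ▸ linf_sub_octantCenter_le hj.1

lemma card_linf_le_two_pow_mul_le {N : ℕ} (x : Fin N → ℝ³) (c : ℝ³) (r : ℝ) (m : ℕ) :
    #{j | linf (x j - c) ≤ 2 ^ m * r} ≤ 8 ^ m * Mconc N x r := by
  induction m generalizing c with
  | zero => simpa using card_linf_le_le_Mconc x c r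
  | succ m ih =>
    rw [pow_succ', mul_assoc, pow_succ', mul_assoc]
    exact card_linf_le_two_mul_le x c _ ih

lemma card_dist_le_two_pow_mul_le_Mconc {N : ℕ} (x : Fin N → ℝ³) (i : Fin N)
    (s : Finset (Fin N)) (r : ℝ) (m : ℕ) :
    #{j ∈ s | dist (x i) (x j) ≤ 2 ^ m * r} ≤ 8 ^ m * Mconc N x r := by
  refine le_trans (card_le_card fun j hj => ?_) (card_linf_le_two_pow_mul_le x (x i) r m)
  simp only [mem_filter, mem_univ, true_and] at hj ⊢
  rw [dist_comm, dist_eq_norm] at hj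
  exact (linf_le_norm _).trans hj.2

lemma sum_inv_pow_le_card_div {ι : Type*} {s : Finset ι} {d : ι → ℝ} {a : ℝ} (ha : 0 < a)
    (hd : ∀ j ∈ s, a ≤ d j) (n : ℕ) :
    ∑ j ∈ s, (d j)⁻¹ ^ n ≤ #s / a ^ n := by
  rw [div_eq_mul_inv, ← inv_pow, ← nsmul_eq_mul]
  exact sum_le_card_nsmul _ _ _ fun j hj =>
    pow_le_pow_left₀ (inv_pos.2 (ha.trans_le (hd j hj))).le (inv_anti₀ ha (hd j hj)) n

lemma sum_inv_pow_filter_lt_le {ι : Type*} (s : Finset ι) (d : ι → ℝ) {R t : ℝ}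
    (hR : 0 < R) (htR : 1 ≤ t * R) (n : ℕ) :
    ∑ j ∈ s with R < d j, (d j)⁻¹ ^ n ≤ #s * t ^ n := calc
  _ ≤ #{j ∈ s | R < d j} / R ^ n :=
    sum_inv_pow_le_card_div hR (fun j hj => (mem_filter.1 hj).2.le) n
  _ ≤ #s * R⁻¹ ^ n := by
    rw [div_eq_mul_inv, inv_pow]
    gcongr
    exact filter_subset _ _
  _ ≤ #s * t ^ n := by
    gcongr
    exact (inv_le_iff_one_le_mul₀ hR).2 (mul_comm t R ▸ htR)

/-- Each dyadic shell `2 ^ k λ < d ≤ 2 ^ (k + 1) λ` contributes at most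
`8 ^ (k + 1) M / (2 ^ k λ) ^ 3 = 8 M / λ ^ 3`. -/
lemma sum_inv_pow_three_le_of_dyadic_count {ι : Type*} (s : Finset ι) (d : ι → ℝ)
    {lam δ M : ℝ} (hlam : 0 < lam) (hδ : 0 < δ) (hδd : ∀ j ∈ s, δ ≤ d j)
    (hcount : ∀ m : ℕ, (#{j ∈ s | d j ≤ 2 ^ m * lam} : ℝ) ≤ 8 ^ m * M) (K : ℕ) :
    ∑ j ∈ s, (d j)⁻¹ ^ 3
      ≤ M / δ ^ 3 + 8 * K * M / lam ^ 3
        + ∑ j ∈ s with 2 ^ K * lam < d j, (d j)⁻¹ ^ 3 := by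
  induction K with
  | zero =>
    have hnear : ∑ j ∈ s with d j ≤ lam, (d j)⁻¹ ^ 3 ≤ M / δ ^ 3 := by
      refine (sum_inv_pow_le_card_div hδ (fun j hj => hδd j (mem_filter.1 hj).1) 3).trans ?_
      gcongr
      simpa using hcount 0
    rw [← sum_filter_add_sum_filter_not s (fun j => d j ≤ lam)]
    simp only [not_le, pow_zero, one_mul, Nat.cast_zero, mul_zero, zero_mul, zero_div, add_zero]
    linarith
  | succ K ih =>
    have h2K : (0 : ℝ) < 2 ^ K * lam := by positivity
    have hshell : ∑ j ∈ s with 2 ^ K * lam < d j ∧ d j ≤ 2 ^ (K + 1) * lam, (d j)⁻¹ ^ 3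
        ≤ 8 * M / lam ^ 3 := calc
      _ ≤ #{j ∈ s | 2 ^ K * lam < d j ∧ d j ≤ 2 ^ (K + 1) * lam} / (2 ^ K * lam) ^ 3 :=
        sum_inv_pow_le_card_div h2K (fun j hj => (mem_filter.1 hj).2.1.le) 3
      _ ≤ 8 ^ (K + 1) * M / (2 ^ K * lam) ^ 3 := by
        gcongr
        refine le_trans ?_ (hcount (K + 1))
        exact_mod_cast card_le_card (monotone_filter_right s fun _ _ h => And.right h)
      _ = 8 * M / lam ^ 3 := by
        rw [mul_pow, ← pow_mul, pow_succ, mul_comm K 3, pow_mul]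
        field_simp
        ring
    have hsplit := sum_filter_add_sum_filter_not (s.filter fun j => 2 ^ K * lam < d j)
      (fun j => d j ≤ 2 ^ (K + 1) * lam) (fun j => (d j)⁻¹ ^ 3)
    rw [filter_filter, filter_filter] at hsplit
    have hfar : ∀ j, 2 ^ K * lam < d j ∧ ¬ d j ≤ 2 ^ (K + 1) * lam ↔ 2 ^ (K + 1) * lam < d j :=
      fun j => ⟨fun h => not_le.1 h.2,
        fun h => ⟨lt_of_le_of_lt (by gcongr <;> norm_num) h, not_le.2 h⟩⟩
    simp only [hfar] at hsplit
    have hcoeff :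
        8 * ((K + 1 : ℕ) : ℝ) * M / lam ^ 3 = 8 * K * M / lam ^ 3 + 8 * M / lam ^ 3 := by
      push_cast
      ring
    linarith

lemma exists_one_lt_two_pow_mul_of_le_one {u : ℝ} (hu : 0 < u) (hu1 : u ≤ 1) :
    ∃ K : ℕ, 1 < 2 ^ K * u ∧ (K : ℝ) ≤ 2 * |Real.log u| + 1 := by
  obtain ⟨n, hn, hn1⟩ := exists_nat_pow_near (one_le_inv₀ hu |>.2 hu1) one_lt_two
  refine ⟨n + 1, by
    simpa [inv_mul_cancel₀ hu.ne'] using mul_lt_mul_of_pos_right hn1 hu, ?_⟩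
  have hlog : n * Real.log 2 ≤ |Real.log u| := by
    rw [← Real.log_pow, abs_of_nonpos (Real.log_nonpos hu.le hu1), ← Real.log_inv]
    exact Real.log_le_log (by positivity) hn
  have := Real.log_two_gt_d9
  push_cast
  nlinarith [abs_nonneg (Real.log u)]

lemma rpow_mul_le_of_le_mul_rpow_neg {a b c y : ℝ} (ha : 0 < a) (h : y ≤ c * a ^ (-b)) :
    a ^ b * y ≤ c := by
  rw [Real.rpow_neg ha.le, ← div_eq_mul_inv] at h
  rwa [mul_comm, ← le_div_iff₀ (by positivity)]

lemma sum_inv_dist_pow_three_le {N : ℕ} (x : Fin N → ℝ³) (i : Fin N) {δ lam t : ℝ}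
    (hδ : 0 < δ) (hδx : ∀ j, j ≠ i → δ ≤ dist (x i) (x j)) (hlam : 0 < lam) (K : ℕ)
    (hK : 1 ≤ t * (2 ^ K * lam)) :
    ∑ j ∈ univ.filter (· ≠ i), (dist (x i) (x j))⁻¹ ^ 3
      ≤ Mconc N x lam / δ ^ 3 + 8 * K * Mconc N x lam / lam ^ 3 + N * t ^ 3 := by
  have hnear := sum_inv_pow_three_le_of_dyadic_count (univ.filter (· ≠ i))
    (fun j => dist (x i) (x j)) (M := Mconc N x lam) hlam hδ
    (fun j hj => hδx j (mem_filter.1 hj).2)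
    (fun m => by exact_mod_cast card_dist_le_two_pow_mul_le_Mconc x i _ lam m) K
  have hfar := sum_inv_pow_filter_lt_le (univ.filter (· ≠ i)) (fun j => dist (x i) (x j))
    (by positivity) hK 3
  have ht : 0 ≤ t := (pos_of_mul_pos_left (one_pos.trans_le hK) (by positivity)).le
  refine hnear.trans ?_
  gcongr
  refine hfar.trans ?_
  gcongr
  exact_mod_cast (card_le_univ _).trans_eq (Fintype.card_fin N)

theorem stmt1 (Mbar : ℝ) (hMbar : 0 < Mbar) :
    ∃ C : ℝ, 0 < C ∧
      ∀ (N : ℕ), 2 ≤ N →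
      ∀ x : Fin N → EuclideanSpace ℝ (Fin 3), Function.Injective x →
      ∀ dmin : ℝ, IsLeast {d : ℝ | ∃ i j : Fin N, i ≠ j ∧ d = dist (x i) (x j)} dmin →
      ∀ lam : ℝ, 0 < lam → lam ≤ (2/3) * Mbar ^ (-(1:ℝ)/3) →
      (Mconc N x lam : ℝ) ≤ Mbar * N * lam ^ 3 →
      ∀ i : Fin N,
        (1 / (N : ℝ)) * ∑ j ∈ Finset.univ.filter (fun j => j ≠ i), (dist (x i) (x j))⁻¹ ^ 3
          ≤ C * Mbar * (lam ^ 3 / dmin ^ 3 + |Real.log (Mbar ^ ((1:ℝ)/3) * lam)| + 1) := by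
  refine ⟨16, by norm_num, fun N _ x hx dmin hdmin lam hlam hlam_le hM i => ?_⟩
  set t := Mbar ^ ((1 : ℝ) / 3)
  have ht3 : t ^ 3 = Mbar := by
    rw [← Real.rpow_natCast, ← Real.rpow_mul hMbar.le]
    norm_num
  rw [neg_div] at hlam_le
  obtain ⟨K, hK, hKlog⟩ := exists_one_lt_two_pow_mul_of_le_one (by positivity)
    ((rpow_mul_le_of_le_mul_rpow_neg hMbar hlam_le).trans (by norm_num))
  have hdmin_pos : 0 < dmin := by
    obtain ⟨⟨a, b, hab, rfl⟩, -⟩ := hdmin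
    exact dist_pos.2 (hx.ne hab)
  have hsum := sum_inv_dist_pow_three_le x i hdmin_pos
    (fun j hj => hdmin.2 ⟨i, j, hj.symm, rfl⟩) hlam K (by rw [mul_left_comm]; exact hK.le)
  rw [ht3] at hsum
  have hN : (0 : ℝ) < N := by have := i.pos; positivity
  set M : ℝ := (Mconc N x lam : ℝ)
  have hMN : M / N ≤ Mbar * lam ^ 3 := by rwa [div_le_iff₀ hN, mul_right_comm]
  calc 1 / (N : ℝ) * ∑ j ∈ univ.filter (· ≠ i), (dist (x i) (x j))⁻¹ ^ 3
      ≤ M / N / dmin ^ 3 + 8 * K * (M / N) / lam ^ 3 + Mbar := by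
        rw [one_div_mul_eq_div, div_le_iff₀ hN]
        refine hsum.trans_eq ?_
        field_simp
    _ ≤ Mbar * lam ^ 3 / dmin ^ 3 + 8 * K * (Mbar * lam ^ 3) / lam ^ 3 + Mbar := by gcongr
    _ ≤ 16 * Mbar * (lam ^ 3 / dmin ^ 3 + |Real.log (t * lam)| + 1) := by
        rw [mul_div_assoc, mul_div_assoc, mul_div_cancel_right₀ _ (by positivity)]
        nlinarith [div_nonneg (pow_nonneg hlam.le 3) (pow_nonneg hdmin_pos.le 3)]
end

section
/- Let N ≥ 1 and let (x_1,…,x_N) and (y_1,…,y_N) be two families of points in ℝ³ such that |y_i−y_j| ≥ (1/2)·|x_i−x_j| (Euclidean norm) for all i ≠ j. Then for every λ > 0, the concentration of the family (y_i) satisfies M_Y^N(λ) ≤ 8⁴·M_X^N(λ), where M_X^N(λ) and M_Y^N(λ) denote the concentrations of the families (x_i) and (y_i) respectively. -/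
open Metric Finset WithLp

lemma abs_sub_floor_cell_center_le (t : ℝ) {r : ℝ} (hr : 0 < r) :
    |t - (2 * ⌊t / (2 * r)⌋ + 1) * r| ≤ r := by
  have h2r : 0 < 2 * r := by positivity
  have hlo := (le_div_iff₀ h2r).1 (Int.floor_le (t / (2 * r)))
  have hhi := (div_lt_iff₀ h2r).1 (Int.lt_floor_add_one (t / (2 * r)))
  rw [abs_le]
  constructor <;> nlinarith

lemma floor_div_mem_Icc {t r : ℝ} (hr : 0 < r) {k : ℕ} (ht : |t| ≤ 2 * k * r) :
    ⌊t / (2 * r)⌋ ∈ Icc (-(k : ℤ)) k := by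
  have h2r : 0 < 2 * r := by positivity
  obtain ⟨hlo, hhi⟩ := abs_le.1 ht
  rw [mem_Icc, Int.le_floor, Int.floor_le_iff, le_div_iff₀ h2r, div_lt_iff₀ h2r]
  push_cast
  constructor <;> nlinarith

theorem card_le_pow_mul_of_forall_mem_closedBall {ι κ : Type*} [Fintype ι]
    (p : κ → ι → ℝ) (T : Finset κ) (a : ι → ℝ) {r : ℝ} (hr : 0 < r) (k m : ℕ)
    (hT : ∀ i ∈ T, p i ∈ closedBall a (2 * k * r))
    (hm : ∀ c, ∀ S ⊆ T, (∀ i ∈ S, p i ∈ closedBall c r) → #S ≤ m) :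
    #T ≤ (2 * k + 1) ^ Fintype.card ι * m := by
  classical
  set cell : κ → ι → ℤ := fun i d => ⌊(p i d - a d) / (2 * r)⌋
  have hfiber : ∀ q ∈ T.image cell, #{i ∈ T | cell i = q} ≤ m := by
    refine fun q _ => hm (fun d => a d + (2 * q d + 1) * r) _ (filter_subset _ _) fun i hi => ?_
    obtain ⟨-, rfl⟩ := mem_filter.1 hi
    refine mem_closedBall.2 ((dist_pi_le_iff hr.le).2 fun d => ?_)
    simpa [Real.dist_eq, sub_sub] using abs_sub_floor_cell_center_le (p i d - a d) hr
  have himage : T.image cell ⊆ Icc (-(k : ι → ℤ)) k := by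
    refine image_subset_iff.2 fun i hi => ?_
    have hi := (dist_pi_le_iff (by positivity)).1 (mem_closedBall.1 (hT i hi))
    exact mem_Icc.2 ⟨fun d => (mem_Icc.1 (floor_div_mem_Icc hr (hi d))).1,
      fun d => (mem_Icc.1 (floor_div_mem_Icc hr (hi d))).2⟩
  calc #T ≤ m * #(T.image cell) := card_le_mul_card_image T m hfiber
    _ ≤ m * #(Icc (-(k : ι → ℤ)) k) := by gcongr
    _ = (2 * k + 1) ^ Fintype.card ι * m := by
      rw [Pi.card_Icc, mul_comm]
      congr 1
      simp only [Pi.neg_apply, Pi.natCast_apply, Int.card_Icc, prod_const, card_univ]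
      congr 1
      omega

lemma EuclideanSpace.dist_le_sqrt_card_mul_dist_ofLp {ι : Type*} [Fintype ι]
    (x y : EuclideanSpace ℝ ι) : dist x y ≤ √(Fintype.card ι) * dist (ofLp x) (ofLp y) := by
  have := (PiLp.antilipschitzWith_ofLp 2 fun _ : ι => ℝ).le_mul_dist x y
  simpa [Real.sqrt_eq_rpow] using this

lemma EuclideanSpace.dist_ofLp_le_dist {ι : Type*} [Fintype ι] (x y : EuclideanSpace ℝ ι) :
    dist (ofLp x) (ofLp y) ≤ dist x y := by
  simpa using (PiLp.lipschitzWith_ofLp 2 fun _ : ι => ℝ).dist_le_mul x y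

lemma linf_eq_norm_ofLp (v : EuclideanSpace ℝ (Fin 3)) : linf v = ‖ofLp v‖ := by
  have hnonneg : 0 ≤ linf v := (abs_nonneg _).trans (le_max_right _ _)
  refine le_antisymm ?_ ((pi_norm_le_iff_of_nonneg hnonneg).2 fun d => ?_)
  · exact max_le (max_le (norm_le_pi_norm (ofLp v) 0) (norm_le_pi_norm (ofLp v) 1))
      (norm_le_pi_norm (ofLp v) 2)
  · fin_cases d
    · exact (le_max_left _ _).trans (le_max_left _ _)
    · exact (le_max_right _ _).trans (le_max_left _ _)
    · exact le_max_right _ _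

lemma mem_linf_ball_iff {x c : EuclideanSpace ℝ (Fin 3)} {r : ℝ} :
    linf (x - c) ≤ r ↔ ofLp x ∈ closedBall (ofLp c) r := by
  rw [linf_eq_norm_ofLp, mem_closedBall, dist_eq_norm, ofLp_sub]

theorem Mconc_le_iff {N m : ℕ} {x : Fin N → EuclideanSpace ℝ (Fin 3)} {r : ℝ} :
    Mconc N x r ≤ m ↔
      ∀ (c : Fin 3 → ℝ) (S : Finset (Fin N)), (∀ i ∈ S, ofLp (x i) ∈ closedBall c r) → #S ≤ m := by
  classical
  have hcard : ∀ c, Nat.card {i : Fin N | linf (x i - c) ≤ r} =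
      #{i | ofLp (x i) ∈ closedBall (ofLp c) r} := fun c => by
    simp only [Nat.card_eq_card_toFinset, Set.toFinset_ofPred, mem_linf_ball_iff]
  have hbdd : BddAbove {m : ℕ | ∃ c, m = Nat.card {i : Fin N | linf (x i - c) ≤ r}} := by
    refine ⟨N, ?_⟩
    rintro _ ⟨c, rfl⟩
    rw [hcard]
    exact (card_le_univ _).trans_eq (Fintype.card_fin N)
  constructor
  · intro hM c S hS
    refine le_trans ?_ (le_trans (le_csSup hbdd ⟨toLp 2 c, rfl⟩) hM)
    rw [hcard, ofLp_toLp]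
    exact card_le_card fun i hi => mem_filter.2 ⟨mem_univ i, hS i hi⟩
  · intro h
    refine csSup_le ⟨_, 0, rfl⟩ ?_
    rintro _ ⟨c, rfl⟩
    rw [hcard]
    exact h _ _ fun i hi => (mem_filter.1 hi).2

theorem stmt6_general (N : ℕ) (x y : Fin N → EuclideanSpace ℝ (Fin 3))
    (h : ∀ i j : Fin N, i ≠ j → (1/2) * dist (x i) (x j) ≤ dist (y i) (y j))
    (lam : ℝ) (hlam : 0 < lam) :
    Mconc N y lam ≤ 8 ^ 4 * Mconc N x lam := by
  refine Mconc_le_iff.2 fun c T hT => ?_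
  obtain rfl | ⟨i₀, hi₀⟩ := T.eq_empty_or_nonempty
  · simp
  have hxT : ∀ i ∈ T, ofLp (x i) ∈ closedBall (ofLp (x i₀)) (2 * (4 : ℕ) * lam) := by
    intro i hi
    rcases eq_or_ne i i₀ with rfl | hne
    · exact mem_closedBall_self (by positivity)
    have hy : dist (ofLp (y i)) (ofLp (y i₀)) ≤ 2 * lam :=
      (dist_triangle_right _ _ c).trans
        (by linarith [mem_closedBall.1 (hT i hi), mem_closedBall.1 (hT i₀ hi₀)])
    have hsqrt : √(Fintype.card (Fin 3) : ℝ) ≤ 2 := by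
      rw [Fintype.card_fin, Real.sqrt_le_left (by norm_num)]; norm_num
    calc dist (ofLp (x i)) (ofLp (x i₀)) ≤ dist (x i) (x i₀) := EuclideanSpace.dist_ofLp_le_dist _ _
      _ ≤ 2 * dist (y i) (y i₀) := by linarith [h i i₀ hne]
      _ ≤ 2 * (√(Fintype.card (Fin 3) : ℝ) * dist (ofLp (y i)) (ofLp (y i₀))) :=
        by gcongr; exact EuclideanSpace.dist_le_sqrt_card_mul_dist_ofLp _ _
      _ ≤ 2 * (2 * (2 * lam)) := by gcongr
      _ = 2 * (4 : ℕ) * lam := by push_cast; ring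
  calc #T ≤ (2 * 4 + 1) ^ Fintype.card (Fin 3) * Mconc N x lam :=
        card_le_pow_mul_of_forall_mem_closedBall _ T _ hlam 4 _ hxT
          fun c' S _ hS => Mconc_le_iff.1 le_rfl c' S hS
    _ ≤ 8 ^ 4 * Mconc N x lam := Nat.mul_le_mul_right _ (by simp)

theorem stmt6 (N : ℕ) (hN : 1 ≤ N) (x y : Fin N → EuclideanSpace ℝ (Fin 3))
    (h : ∀ i j : Fin N, i ≠ j → (1/2) * dist (x i) (x j) ≤ dist (y i) (y j))
    (lam : ℝ) (hlam : 0 < lam) :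
    Mconc N y lam ≤ 8 ^ 4 * Mconc N x lam :=
  stmt6_general N x y h lam hlam
end

section
/- Let N ≥ 1, M̄ > 0, λ > 0 and x_1,…,x_N ∈ ℝ³ with M^N(λ) ≤ M̄·N·λ³. Define ρ̃ : ℝ³ → ℝ by ρ̃(x) = (1/N)·∑_{i=1}^N 1_{B_∞(x_i, λ/3)}(x) / (2λ/3)³, where B_∞(x_i, λ/3) is the closed l∞-ball of center x_i and radius λ/3 and (2λ/3)³ is its Lebesgue measure. Then ρ̃(x) ≤ (27/8)·M̄ for every x ∈ ℝ³. -/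
/-! Every particle within `l∞`-distance `λ/3` of `z` lies in the closed `l∞`-ball of radius `λ`
around `z`, so there are at most `M^N(λ) ≤ M̄ N λ³` of them; dividing by `N (2λ/3)³ = 8 N λ³ / 27`
gives `27 M̄ / 8`. -/

open Finset

lemma linf_sub_comm (v w : EuclideanSpace ℝ (Fin 3)) : linf (v - w) = linf (w - v) := by
  simp only [linf, PiLp.sub_apply, abs_sub_comm]

lemma card_ball_le_Mconc (N : ℕ) (x : Fin N → EuclideanSpace ℝ (Fin 3)) (r : ℝ)
    (c : EuclideanSpace ℝ (Fin 3)) :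
    #{i | linf (x i - c) ≤ r} ≤ Mconc N x r := by
  refine le_csSup ⟨N, ?_⟩ ⟨c, ?_⟩
  · rintro m ⟨w, rfl⟩
    exact (Finite.card_subtype_le _).trans (Nat.card_fin N).le
  · rw [Nat.card_eq_fintype_card, Fintype.card_subtype]
    rfl

lemma card_ball_le_Mconc_of_le (N : ℕ) (x : Fin N → EuclideanSpace ℝ (Fin 3)) {s r : ℝ}
    (hsr : s ≤ r) (z : EuclideanSpace ℝ (Fin 3)) :
    #{i | linf (z - x i) ≤ s} ≤ Mconc N x r := by
  refine le_trans (card_le_card fun i hi => ?_) (card_ball_le_Mconc N x r z)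
  simp only [mem_filter, mem_univ, true_and] at hi ⊢
  rw [linf_sub_comm]
  exact hi.trans hsr

theorem stmt11_general (N : ℕ) (hN : 1 ≤ N) (Mbar lam : ℝ) (hlam : 0 < lam)
    (x : Fin N → EuclideanSpace ℝ (Fin 3))
    (hconc : (Mconc N x lam : ℝ) ≤ Mbar * N * lam ^ 3) :
    ∀ z : EuclideanSpace ℝ (Fin 3),
      (1 / (N : ℝ)) * ∑ i : Fin N,
          (if linf (z - x i) ≤ lam / 3 then (1:ℝ) else 0) / (2 * lam / 3) ^ 3
        ≤ 27 / 8 * Mbar := by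
  intro z
  have hcount : (#{i | linf (z - x i) ≤ lam / 3} : ℝ) ≤ Mbar * N * lam ^ 3 :=
    (Nat.cast_le.mpr (card_ball_le_Mconc_of_le N x (by linarith) z)).trans hconc
  have hNpos : (0 : ℝ) < N := by exact_mod_cast hN
  rw [← Finset.sum_div, Finset.sum_boole, one_div_mul_eq_div, div_div, div_le_iff₀ (by positivity)]
  linarith

theorem stmt11 (N : ℕ) (hN : 1 ≤ N) (Mbar lam : ℝ) (hMbar : 0 < Mbar) (hlam : 0 < lam)
    (x : Fin N → EuclideanSpace ℝ (Fin 3))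
    (hconc : (Mconc N x lam : ℝ) ≤ Mbar * N * lam ^ 3) :
    ∀ z : EuclideanSpace ℝ (Fin 3),
      (1 / (N : ℝ)) * ∑ i : Fin N,
          (if linf (z - x i) ≤ lam / 3 then (1:ℝ) else 0) / (2 * lam / 3) ^ 3
        ≤ 27 / 8 * Mbar :=
  stmt11_general N hN Mbar lam hlam x hconc
end

section
/- Let T > 0, C₁ > 0, b ≥ 0 and τ₀ > 0 with C₁·τ₀ ≤ 1/2. Let f : [0,T] → [0,∞) be a function such that for every t ∈ (0,T] and every τ with 0 < τ ≤ min(τ₀, t), one has f(t) ≤ f(t−τ) + C₁·τ·f(t) + τ·b. Then for every t ∈ [0,T], f(t) ≤ ( f(0) + t·b )·e^{2C₁t}. -/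
/-!
Partition `[0, t]` uniformly with step `τ = t / n ≤ τ₀`. Since `C₁τ ≤ 1/2`, the one-step inequality
can be solved for `f(t)`, and `(1 - C₁τ)⁻¹ ≤ e^{2C₁τ}` turns it into
`f((k+1)τ) ≤ (f(kτ) + τb) e^{2C₁τ}`; iterating `n` times gives the bound, as `nτ = t`.
-/

open Real

lemma one_le_one_sub_mul_exp_two_mul {x : ℝ} (hx₀ : 0 ≤ x) (hx : x ≤ 1 / 2) :
    1 ≤ (1 - x) * exp (2 * x) := by
  nlinarith [add_one_le_exp (2 * x), exp_pos (2 * x)]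

lemma le_add_mul_exp_of_le_add_mul_self {x y c τ b : ℝ} (hy : 0 ≤ y) (hcτ₀ : 0 ≤ c * τ)
    (hcτ : c * τ ≤ 1 / 2) (h : y ≤ x + c * τ * y + τ * b) :
    y ≤ (x + τ * b) * exp (2 * (c * τ)) :=
  calc y ≤ y * ((1 - c * τ) * exp (2 * (c * τ))) :=
        le_mul_of_one_le_right hy (one_le_one_sub_mul_exp_two_mul hcτ₀ hcτ)
    _ = (y - c * τ * y) * exp (2 * (c * τ)) := by ring
    _ ≤ (x + τ * b) * exp (2 * (c * τ)) := by gcongr; linarith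

lemma le_add_mul_pow_of_succ_le {u : ℕ → ℝ} {a E : ℝ} {n : ℕ} (ha : 0 ≤ a) (hE : 1 ≤ E)
    (hu : ∀ k < n, u (k + 1) ≤ (u k + a) * E) :
    ∀ k ≤ n, u k ≤ (u 0 + k * a) * E ^ k := by
  intro k hk
  induction k with
  | zero => simp
  | succ k ih =>
    have hEk : 1 ≤ E ^ k := one_le_pow₀ hE
    calc u (k + 1) ≤ (u k + a) * E := hu k hk
      _ ≤ ((u 0 + k * a) * E ^ k + a * E ^ k) * E := by
          gcongr
          · exact ih (by omega)
          · exact le_mul_of_one_le_right ha hEk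
      _ = (u 0 + ↑(k + 1) * a) * E ^ (k + 1) := by push_cast; ring

lemma exists_pos_nat_div_le {t τ₀ : ℝ} (ht : 0 < t) (hτ₀ : 0 < τ₀) :
    ∃ n : ℕ, 0 < n ∧ t / n ≤ τ₀ := by
  have hn : 0 < ⌈t / τ₀⌉₊ := Nat.ceil_pos.mpr (div_pos ht hτ₀)
  refine ⟨⌈t / τ₀⌉₊, hn, ?_⟩
  rw [div_le_iff₀ (by exact_mod_cast hn), mul_comm, ← div_le_iff₀ hτ₀]
  exact Nat.le_ceil _

theorem stmt16_general (T C1 b τ0 : ℝ) (hC1 : 0 < C1) (hb : 0 ≤ b)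
    (hτ0 : 0 < τ0) (hτ0' : C1 * τ0 ≤ 1/2)
    (f : ℝ → ℝ) (hf : ∀ t ∈ Set.Icc (0:ℝ) T, 0 ≤ f t)
    (hstep : ∀ t ∈ Set.Ioc (0:ℝ) T, ∀ τ : ℝ, 0 < τ → τ ≤ min τ0 t →
      f t ≤ f (t - τ) + C1 * τ * f t + τ * b) :
    ∀ t ∈ Set.Icc (0:ℝ) T, f t ≤ (f 0 + t * b) * Real.exp (2 * C1 * t) := by
  rintro t ⟨ht₀, htT⟩
  rcases ht₀.eq_or_lt with rfl | ht
  · simp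
  obtain ⟨n, hn, hτ⟩ := exists_pos_nat_div_le ht hτ0
  set τ := t / n
  have hτpos : 0 < τ := by positivity
  have hnτ : n * τ = t := mul_div_cancel₀ t (by positivity)
  have hgrid : ∀ k < n, f ((k + 1 : ℕ) * τ) ≤ (f (k * τ) + τ * b) * exp (2 * (C1 * τ)) := by
    intro k hk
    have hkn : ((k + 1 : ℕ) : ℝ) ≤ n := by exact_mod_cast hk
    have hτs : τ ≤ (k + 1 : ℕ) * τ := le_mul_of_one_le_left hτpos.le (by simp)
    have hsT : (k + 1 : ℕ) * τ ≤ T := by nlinarith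
    have h := hstep _ ⟨by positivity, hsT⟩ τ hτpos (le_min hτ hτs)
    rw [show ((k + 1 : ℕ) : ℝ) * τ - τ = k * τ by push_cast; ring] at h
    exact le_add_mul_exp_of_le_add_mul_self (hf _ ⟨by positivity, hsT⟩) (by positivity)
      (by nlinarith) h
  have := le_add_mul_pow_of_succ_le (u := fun k : ℕ ↦ f (k * τ)) (by positivity)
    (one_le_exp (by positivity)) hgrid n le_rfl
  simp only [CharP.cast_eq_zero, zero_mul, ← exp_nat_mul] at this
  rwa [hnτ, show (n : ℝ) * (τ * b) = t * b by rw [← hnτ]; ring,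
    show (n : ℝ) * (2 * (C1 * τ)) = 2 * C1 * t by rw [← hnτ]; ring] at this

theorem stmt16 (T C1 b τ0 : ℝ) (hT : 0 < T) (hC1 : 0 < C1) (hb : 0 ≤ b)
    (hτ0 : 0 < τ0) (hτ0' : C1 * τ0 ≤ 1/2)
    (f : ℝ → ℝ) (hf : ∀ t ∈ Set.Icc (0:ℝ) T, 0 ≤ f t)
    (hstep : ∀ t ∈ Set.Ioc (0:ℝ) T, ∀ τ : ℝ, 0 < τ → τ ≤ min τ0 t →
      f t ≤ f (t - τ) + C1 * τ * f t + τ * b) :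
    ∀ t ∈ Set.Icc (0:ℝ) T, f t ≤ (f 0 + t * b) * Real.exp (2 * C1 * t) :=
  stmt16_general T C1 b τ0 hC1 hb hτ0 hτ0' f hf hstep
end
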